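/- arXiv:1006.0415 — 5 statements merged into one kernel-verified Lean document; each statement's English description precedes it below -/
import Mathlib

section
/- Suppose Γ ⊂ ℕ₀ satisfies Γ = RΓ + L with R ≥ 2 and L ⊂ ℕ₀ finite with elements pairwise incongruent modulo R. Then the kernel G(z,x) = Σ_{γ∈Γ} z^γ e^{−2πiγx} satisfies the functional equation G(z,x) = (Σ_{l∈L} z^l e^{−2πilx}) · G(z^R, Rx) for all z in the open unit disk and x ∈ ℝ. -/
open Complex Real

/-!
The relation `Γ = RΓ + L` with digits `L` pairwise incongruent mod `R` says exactly that
`(γ, l) ↦ Rγ + l` is a bijection `Γ × L ≃ Γ`. Since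
`z^(Rγ+l) e^{-2πi(Rγ+l)x} = (z^l e^{-2πilx}) · (z^R)^γ e^{-2πiγ(Rx)}`, reindexing the series for
`G(z,x)` along this bijection turns it into the product of the finite sum over `L` with the series
for `G(z^R, Rx)`; absolute convergence for `|z| < 1` justifies multiplying the series.
-/

namespace SelfSimilarSet

variable {Γ : Set ℕ} {R : ℕ} {L : Finset ℕ}

theorem affine_mem (hΓ : Γ = {n : ℕ | ∃ γ ∈ Γ, ∃ l ∈ L, n = R * γ + l})
    {γ l : ℕ} (hγ : γ ∈ Γ) (hl : l ∈ L) : R * γ + l ∈ Γ := by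
  rw [hΓ]
  exact ⟨γ, hγ, l, hl, rfl⟩

theorem affine_injective (hR : 0 < R) (hL : ∀ l ∈ L, ∀ l' ∈ L, l % R = l' % R → l = l')
    {γ γ' l l' : ℕ} (hl : l ∈ L) (hl' : l' ∈ L) (h : R * γ + l = R * γ' + l') :
    γ = γ' ∧ l = l' := by
  have hll' : l = l' := hL l hl l' hl' (by simpa [Nat.mul_add_mod] using congrArg (· % R) h)
  subst hll'
  exact ⟨Nat.eq_of_mul_eq_mul_left hR (by omega), rfl⟩

noncomputable def digitEquiv (hR : 0 < R) (hL : ∀ l ∈ L, ∀ l' ∈ L, l % R = l' % R → l = l')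
    (hΓ : Γ = {n : ℕ | ∃ γ ∈ Γ, ∃ l ∈ L, n = R * γ + l}) : Γ × L ≃ Γ :=
  Equiv.ofBijective (fun p => ⟨R * p.1 + p.2, affine_mem hΓ p.1.2 p.2.2⟩) <| by
    refine ⟨fun ⟨⟨γ, _⟩, ⟨l, hl⟩⟩ ⟨⟨γ', _⟩, ⟨l', hl'⟩⟩ h => ?_, fun ⟨n, hn⟩ => ?_⟩
    · obtain ⟨rfl, rfl⟩ := affine_injective hR hL hl hl' (congrArg Subtype.val h)
      rfl
    · rw [hΓ] at hn
      obtain ⟨γ, hγ, l, hl, rfl⟩ := hn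
      exact ⟨⟨⟨γ, hγ⟩, ⟨l, hl⟩⟩, rfl⟩

theorem tsum_eq_sum_mul_tsum (hR : 0 < R) (hL : ∀ l ∈ L, ∀ l' ∈ L, l % R = l' % R → l = l')
    (hΓ : Γ = {n : ℕ | ∃ γ ∈ Γ, ∃ l ∈ L, n = R * γ + l}) {f g h : ℕ → ℂ}
    (hfgh : ∀ γ l, f (R * γ + l) = g l * h γ) (hh : Summable fun γ : Γ => ‖h γ‖) :
    ∑' γ : Γ, f γ = (∑ l ∈ L, g l) * ∑' γ : Γ, h γ := by
  rw [← Finset.tsum_subtype, tsum_mul_tsum_of_summable_norm Summable.of_finite hh,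
    ← (Equiv.prodComm Γ L).tsum_eq, ← (digitEquiv hR hL hΓ).tsum_eq]
  exact tsum_congr fun p => hfgh p.1 p.2

end SelfSimilarSet

noncomputable def kernelTerm (z : ℂ) (x : ℝ) (n : ℕ) : ℂ :=
  z ^ n * Complex.exp (-(2 * Real.pi * Complex.I * n * x))

theorem norm_kernelTerm (z : ℂ) (x : ℝ) (n : ℕ) : ‖kernelTerm z x n‖ = ‖z‖ ^ n := by
  simp [kernelTerm, Complex.norm_exp, Complex.mul_re, Complex.mul_im]

theorem summable_norm_kernelTerm {z : ℂ} (hz : ‖z‖ < 1) (x : ℝ) (s : Set ℕ) :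
    Summable fun n : s => ‖kernelTerm z x n‖ := by
  simp only [norm_kernelTerm]
  exact (summable_geometric_of_lt_one (norm_nonneg z) hz).subtype s

theorem kernelTerm_mul_add (z : ℂ) (x : ℝ) (R γ l : ℕ) :
    kernelTerm z x (R * γ + l) = kernelTerm z x l * kernelTerm (z ^ R) (R * x) γ := by
  rw [kernelTerm, kernelTerm, kernelTerm, pow_add, ← pow_mul, mul_mul_mul_comm (z ^ l),
    ← Complex.exp_add, mul_comm (z ^ l)]
  congr 2
  push_cast
  ring

/-- If `Γ = R·Γ + L` with `R ≥ 2` and elements of `L` pairwise incongruent mod `R`,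
then `G(z,x) = ∑_{γ∈Γ} z^γ e^{-2πiγx}` satisfies
`G(z,x) = (∑_{l∈L} z^l e^{-2πilx}) · G(z^R, Rx)`. -/
theorem stmt3 (Γ : Set ℕ) (R : ℕ) (hR : 2 ≤ R) (L : Finset ℕ)
    (hL : ∀ l ∈ L, ∀ l' ∈ L, l % R = l' % R → l = l')
    (hΓ : Γ = {n : ℕ | ∃ γ ∈ Γ, ∃ l ∈ L, n = R * γ + l})
    (G : ℂ → ℝ → ℂ)
    (hG : ∀ z : ℂ, ∀ x : ℝ, G z x =
      ∑' γ : Γ, z ^ (γ : ℕ) * Complex.exp (-(2 * Real.pi * Complex.I * (γ : ℕ) * x))) :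
    ∀ z : ℂ, ‖z‖ < 1 → ∀ x : ℝ,
      G z x = (∑ l ∈ L, z ^ l * Complex.exp (-(2 * Real.pi * Complex.I * l * x))) *
        G (z ^ R) (R * x) := by
  intro z hz x
  have hzR : ‖z ^ R‖ < 1 := by
    rw [norm_pow]
    exact pow_lt_one₀ (norm_nonneg z) hz (by omega)
  rw [hG, hG]
  exact SelfSimilarSet.tsum_eq_sum_mul_tsum (by omega) hL hΓ (kernelTerm_mul_add z x R)
    (summable_norm_kernelTerm hzR _ Γ)
end

section
/- Let μ be a Borel probability measure on ℝ with compact support, and let Γ ⊂ ℕ₀ be a spectrum for μ (i.e., {e^{2πiγx} : γ ∈ Γ} is an orthonormal basis of L²(μ)). Then the map sending e_γ to the monomial z^γ extends to a linear isometry of L²(μ) into the Hardy space H²(𝔻). -/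
open Complex Real MeasureTheory

/-!
A spectrum `Γ` makes the exponentials `e_γ` a Hilbert basis of `L²(μ)`, while the monomials
`z^γ`, i.e. the unit vectors `δ_γ` of `ℓ²(ℕ) ≅ H²(𝔻)`, are orthonormal. Any map sending a
Hilbert basis to an orthonormal family extends to a linear isometry: expand in the basis and
resum against the orthonormal family.
-/

theorem lp.orthonormal_single {ι 𝕜 : Type*} [RCLike 𝕜] [DecidableEq ι] :
    Orthonormal 𝕜 (fun i : ι => lp.single 2 i (1 : 𝕜)) := by
  rw [orthonormal_iff_ite]
  intro i j
  rw [lp.inner_single_left, lp.single_apply, Pi.single_apply]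
  split_ifs <;> simp

theorem HilbertBasis.exists_linearIsometry_apply_eq {ι 𝕜 E F : Type*} [RCLike 𝕜]
    [NormedAddCommGroup E] [InnerProductSpace 𝕜 E] [NormedAddCommGroup F]
    [InnerProductSpace 𝕜 F] [CompleteSpace F] (b : HilbertBasis ι 𝕜 E) {v : ι → F}
    (hv : Orthonormal 𝕜 v) : ∃ J : E →ₗᵢ[𝕜] F, ∀ i, J (b i) = v i := by
  classical
  refine ⟨hv.orthogonalFamily.linearIsometry.comp b.repr.toLinearIsometry, fun i => ?_⟩
  simp [b.repr_self]

theorem stmt4_general (μ : Measure ℝ)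
    (Γ : Set ℕ)
    (hmem : ∀ n : ℕ, MemLp (fun x : ℝ => Complex.exp (2 * Real.pi * Complex.I * n * x)) 2 μ)
    (honb : Orthonormal ℂ (fun γ : Γ => (hmem (γ : ℕ)).toLp _))
    (hdense : ⊤ ≤ (Submodule.span ℂ
      (Set.range (fun γ : Γ => (hmem (γ : ℕ)).toLp _))).topologicalClosure) :
    ∃ J : Lp ℂ 2 μ →ₗᵢ[ℂ] lp (fun _ : ℕ => ℂ) 2,
      ∀ γ : Γ, J ((hmem (γ : ℕ)).toLp _) = lp.single 2 (γ : ℕ) 1 := by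
  have hmonomials :
      Orthonormal ℂ (fun γ : Γ => (lp.single 2 (γ : ℕ) 1 : lp (fun _ : ℕ => ℂ) 2)) :=
    lp.orthonormal_single.comp _ Subtype.val_injective
  obtain ⟨J, hJ⟩ := (HilbertBasis.mk honb hdense).exists_linearIsometry_apply_eq hmonomials
  refine ⟨J, fun γ => ?_⟩
  rw [← hJ γ, HilbertBasis.coe_mk]

/-- If `μ` is a compactly supported Borel probability measure on `ℝ` and
`Γ ⊆ ℕ` is a spectrum for `μ` (the exponentials `e_γ`, `γ ∈ Γ`, form an
orthonormal basis of `L²(μ)`), then `e_γ ↦ z^γ` extends to a linear isometry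
of `L²(μ)` into the Hardy space `H²(𝔻)` (realized as `ℓ²(ℕ)` via Taylor
coefficients, where `z^γ` corresponds to the standard basis vector `δ_γ`). -/
theorem stmt4 (μ : Measure ℝ) [IsProbabilityMeasure μ]
    (hK : ∃ K : Set ℝ, IsCompact K ∧ μ Kᶜ = 0)
    (Γ : Set ℕ)
    (hmem : ∀ n : ℕ, MemLp (fun x : ℝ => Complex.exp (2 * Real.pi * Complex.I * n * x)) 2 μ)
    (honb : Orthonormal ℂ (fun γ : Γ => (hmem (γ : ℕ)).toLp _))
    (hdense : ⊤ ≤ (Submodule.span ℂ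
      (Set.range (fun γ : Γ => (hmem (γ : ℕ)).toLp _))).topologicalClosure) :
    ∃ J : Lp ℂ 2 μ →ₗᵢ[ℂ] lp (fun _ : ℕ => ℂ) 2,
      ∀ γ : Γ, J ((hmem (γ : ℕ)).toLp _) = lp.single 2 (γ : ℕ) 1 :=
  stmt4_general μ Γ hmem honb hdense
end

section
/- Suppose A ⊕ A' = {0,...,R−1} with R ≥ 2. Let μ_A be the unique Borel probability measure satisfying μ_A(E) = (1/#A) Σ_{a∈A} μ_A(R·E − a) for all Borel sets E (the invariant measure of the affine IFS τ_a(x) = (x+a)/R), and similarly μ_{A'}. Then the convolution μ_A ∗ μ_{A'} equals Lebesgue measure restricted to [0,1]. -/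
/-!
On the Fourier side the invariance of `μ_A` reads `φ_A(t) = m_A(t/R) φ_A(t/R)` with the mask
`m_A(s) = (#A)⁻¹ ∑_{a ∈ A} e^{ias}`. Since `A ⊕ A' = {0,…,R−1}`, `m_A m_{A'}` is the mask of
`{0,…,R−1}`, so `φ_A φ_{A'}`, the characteristic function of `μ_A ∗ μ_{A'}`, satisfies the same
equation as that of Lebesgue measure on `[0,1]`, which is invariant under the `R`-adic digit system.
As `|m| ≤ 1`, the difference `d` of two solutions obeys `|d(t)| ≤ |d(t/Rⁿ)| → |d(0)| = 0`.
-/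

open MeasureTheory

/-- `A ⊕ A' = {0,…,R−1}`: the sum map `A × A' → {0,…,R−1}` is a bijection. -/
def ComplPair (A A' : Finset ℕ) (R : ℕ) : Prop :=
  (∀ a ∈ A, ∀ a' ∈ A', a + a' < R) ∧
    ∀ k < R, ∃! p : ℕ × ℕ, p.1 ∈ A ∧ p.2 ∈ A' ∧ p.1 + p.2 = k

open Complex Filter Topology

namespace ComplPair

variable {A A' : Finset ℕ} {R : ℕ}

theorem sum_sum_add {M : Type*} [AddCommMonoid M] (h : ComplPair A A' R) (F : ℕ → M) :
    ∑ a ∈ A, ∑ a' ∈ A', F (a + a') = ∑ k ∈ Finset.range R, F k := by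
  rw [← Finset.sum_product']
  refine Finset.sum_bij (fun p _ => p.1 + p.2) (fun p hp => ?_) (fun p hp q hq hpq => ?_)
    (fun k hk => ?_) (fun _ _ => rfl)
  · rw [Finset.mem_product] at hp
    exact Finset.mem_range.2 (h.1 _ hp.1 _ hp.2)
  · rw [Finset.mem_product] at hp hq
    exact (h.2 _ (h.1 _ hp.1 _ hp.2)).unique ⟨hp.1, hp.2, rfl⟩ ⟨hq.1, hq.2, hpq.symm⟩
  · obtain ⟨p, ⟨hp₁, hp₂, rfl⟩, -⟩ := h.2 k (Finset.mem_range.1 hk)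
    exact ⟨p, Finset.mem_product.2 ⟨hp₁, hp₂⟩, rfl⟩

theorem card_mul_card (h : ComplPair A A' R) : A.card * A'.card = R := by
  simpa using h.sum_sum_add (fun _ => (1 : ℕ))

end ComplPair

noncomputable def mask (B : Finset ℕ) (s : ℝ) : ℂ :=
  (B.card : ℂ)⁻¹ * ∑ b ∈ B, exp (b * s * I)

theorem norm_mask_le_one (B : Finset ℕ) (s : ℝ) : ‖mask B s‖ ≤ 1 := by
  rcases B.eq_empty_or_nonempty with rfl | hB
  · simp [mask]
  have hcard : (0 : ℝ) < B.card := by exact_mod_cast hB.card_pos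
  calc ‖mask B s‖ ≤ (B.card : ℝ)⁻¹ * ∑ b ∈ B, ‖exp (b * s * I)‖ := by
        rw [mask, norm_mul, norm_inv, norm_natCast]
        gcongr
        exact norm_sum_le _ _
    _ = 1 := by
        simp_rw [← ofReal_natCast, ← ofReal_mul, norm_exp_ofReal_mul_I]
        simp [hcard.ne']

theorem ComplPair.mask_mul_mask {A A' : Finset ℕ} {R : ℕ} (h : ComplPair A A' R) (s : ℝ) :
    mask A s * mask A' s = mask (Finset.range R) s := by
  rw [mask, mask, mask, ← h.sum_sum_add, Finset.card_range, ← h.card_mul_card, Nat.cast_mul,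
    mul_inv, mul_mul_mul_comm, Finset.sum_mul_sum]
  simp_rw [Nat.cast_add, add_mul, exp_add]

noncomputable def hutchinsonOp (B : Finset ℕ) (R : ℕ) (μ : Measure ℝ) : Measure ℝ :=
  (B.card : ENNReal)⁻¹ • ∑ b ∈ B, μ.map (fun x : ℝ => (x + b) / R)

theorem charFun_hutchinsonOp (B : Finset ℕ) (R : ℕ) (μ : Measure ℝ) [IsFiniteMeasure μ] (t : ℝ) :
    charFun (hutchinsonOp B R μ) t = mask B (t / R) * charFun μ (t / R) := by
  have hint : ∀ ν : Measure ℝ, IsFiniteMeasure ν → Integrable (fun x : ℝ => exp (t * x * I)) ν :=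
    fun ν _ => (integrable_const (1 : ℝ)).mono (by fun_prop) (by simp [norm_exp])
  rw [hutchinsonOp, charFun_apply_real, integral_smul_measure,
    integral_finsetSum_measure fun b _ => hint _ inferInstance]
  have hterm : ∀ b : ℕ, ∫ x, exp (t * x * I) ∂(μ.map fun x : ℝ => (x + b) / R) =
      exp (b * ↑(t / R) * I) * charFun μ (t / R) := by
    intro b
    rw [integral_map (by fun_prop) (by fun_prop), charFun_apply_real, ← integral_const_mul]
    congr 1 with x
    rw [← exp_add]
    push_cast
    ring_nf
  simp_rw [hterm, ← Finset.sum_mul, ENNReal.toReal_inv, ENNReal.toReal_natCast, mask,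
    Complex.real_smul]
  push_cast
  ring

theorem charFun_eq_mask_mul {B : Finset ℕ} {R : ℕ} {μ : Measure ℝ} [IsFiniteMeasure μ]
    (hμ : μ = hutchinsonOp B R μ) (t : ℝ) :
    charFun μ t = mask B (t / R) * charFun μ (t / R) := by
  conv_lhs => rw [hμ]
  exact charFun_hutchinsonOp B R μ t

theorem MeasureTheory.Measure.ext_of_charFun_eq_mul_charFun_div {μ ν : Measure ℝ}
    [IsProbabilityMeasure μ] [IsProbabilityMeasure ν] {r : ℝ} (hr : 1 < r) {m : ℝ → ℂ}
    (hm : ∀ t, ‖m t‖ ≤ 1)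
    (hμ : ∀ t, charFun μ t = m t * charFun μ (t / r))
    (hν : ∀ t, charFun ν t = m t * charFun ν (t / r)) : μ = ν := by
  refine Measure.ext_of_charFun (funext fun t => sub_eq_zero.1 (norm_le_zero_iff.1 ?_))
  set d : ℝ → ℂ := fun t => charFun μ t - charFun ν t
  have hd : Continuous d := continuous_charFun.sub continuous_charFun
  have hd_zero : d 0 = 0 := by simp [d]
  have hd_le : ∀ t, ‖d t‖ ≤ ‖d (t / r)‖ := fun t => by
    calc ‖d t‖ = ‖m t‖ * ‖d (t / r)‖ := by simp only [d, hμ t, hν t, ← mul_sub, norm_mul]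
      _ ≤ ‖d (t / r)‖ := mul_le_of_le_one_left (norm_nonneg _) (hm t)
  have hd_iter : ∀ n : ℕ, ‖d t‖ ≤ ‖d (t / r ^ n)‖ := fun n => by
    induction n with
    | zero => simp
    | succ n ih => exact ih.trans ((hd_le _).trans_eq (by rw [pow_succ, div_div]))
  have hlim : Tendsto (fun n : ℕ => ‖d (t / r ^ n)‖) atTop (𝓝 0) := by
    have h0 : Tendsto (fun n : ℕ => t / r ^ n) atTop (𝓝 0) :=
      tendsto_const_nhds.div_atTop (tendsto_pow_atTop_atTop_of_one_lt hr)
    simpa [hd_zero, Function.comp_def] using (hd.tendsto 0).norm.comp h0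
  exact ge_of_tendsto' hlim hd_iter

theorem Finset.sum_range_min_max_sub (m : ℕ) (y : ℝ) :
    ∑ k ∈ Finset.range m, min (max (y - k) 0) 1 = min (max y 0) m := by
  induction m with
  | zero => simp
  | succ m ih =>
    rw [Finset.sum_range_succ, ih, Nat.cast_succ]
    have := m.cast_nonneg (α := ℝ)
    grind

theorem volume_restrict_Icc_Iic (x : ℝ) :
    volume.restrict (Set.Icc (0 : ℝ) 1) (Set.Iic x) = ENNReal.ofReal (min (max x 0) 1) := by
  have hinter : Set.Iic x ∩ Set.Icc 0 1 = Set.Icc 0 (min x 1) := by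
    ext z
    simp only [Set.mem_inter_iff, Set.mem_Iic, Set.mem_Icc, le_min_iff]
    tauto
  rw [Measure.restrict_apply measurableSet_Iic, hinter, Real.volume_Icc, sub_zero]
  rcases le_total x 0 with hx | hx
  · simp [hx, ENNReal.ofReal_of_nonpos]
  · rw [max_eq_left hx]

theorem hutchinsonOp_apply_Iic (B : Finset ℕ) {R : ℕ} (hR : R ≠ 0) (μ : Measure ℝ) (x : ℝ) :
    hutchinsonOp B R μ (Set.Iic x) = (B.card : ENNReal)⁻¹ * ∑ b ∈ B, μ (Set.Iic (R * x - b)) := by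
  have hR' : (0 : ℝ) < R := by positivity
  rw [hutchinsonOp, Measure.smul_apply, Measure.finsetSum_apply, smul_eq_mul]
  congr 2 with b
  rw [Measure.map_apply (by fun_prop) measurableSet_Iic]
  congr 1 with z
  simp only [Set.mem_preimage, Set.mem_Iic, div_le_iff₀ hR']
  constructor <;> intro <;> linarith

theorem hutchinsonOp_range_volume_restrict_Icc {R : ℕ} (hR : R ≠ 0) :
    hutchinsonOp (Finset.range R) R (volume.restrict (Set.Icc 0 1)) =
      volume.restrict (Set.Icc 0 1) := by
  refine (Measure.ext_of_Iic _ _ fun x => ?_).symm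
  have hR' : (0 : ℝ) ≤ R := R.cast_nonneg
  have hclip : min (max (R * x) 0) R = R * min (max x 0) 1 := by
    rw [mul_min_of_nonneg _ _ hR', mul_max_of_nonneg _ _ hR', mul_zero, mul_one]
  rw [hutchinsonOp_apply_Iic _ hR, Finset.card_range]
  simp_rw [volume_restrict_Icc_Iic]
  rw [← ENNReal.ofReal_sum_of_nonneg fun k _ => by positivity, Finset.sum_range_min_max_sub,
    hclip, ENNReal.ofReal_mul hR', ENNReal.ofReal_natCast,
    ENNReal.inv_mul_cancel_left (by exact_mod_cast hR) (by simp)]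

/-- If `A ⊕ A' = {0,…,R−1}` and `μ_A`, `μ_{A'}` are the Hutchinson invariant
measures of the affine IFSs `(R,A)` and `(R,A')`, then
`μ_A ∗ μ_{A'}` is Lebesgue measure restricted to `[0,1]`. -/
theorem stmt7 (A A' : Finset ℕ) (R : ℕ) (hR : 2 ≤ R) (h : ComplPair A A' R)
    (μA μA' : Measure ℝ) [IsProbabilityMeasure μA] [IsProbabilityMeasure μA']
    (hμA : μA = (A.card : ENNReal)⁻¹ • ∑ a ∈ A, μA.map (fun x : ℝ => (x + a) / R))
    (hμA' : μA' = (A'.card : ENNReal)⁻¹ • ∑ a ∈ A', μA'.map (fun x : ℝ => (x + a) / R)) :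
    μA.conv μA' = volume.restrict (Set.Icc (0 : ℝ) 1) := by
  have hR₁ : (1 : ℝ) < R := by exact_mod_cast hR
  have : IsProbabilityMeasure (volume.restrict (Set.Icc (0 : ℝ) 1)) := ⟨by simp⟩
  refine Measure.ext_of_charFun_eq_mul_charFun_div hR₁ (fun t => norm_mask_le_one _ (t / R))
    (fun t => ?_) (charFun_eq_mask_mul (hutchinsonOp_range_volume_restrict_Icc (by omega)).symm)
  rw [charFun_conv, charFun_conv, charFun_eq_mask_mul hμA, charFun_eq_mask_mul hμA',
    ← h.mask_mul_mask]
  ring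
end

section
/- Suppose A ⊕ A' = {0,...,R−1} with A ≠ {0}, A' ≠ {0}, R ≥ 2. Then gcd(A) divides R. -/
/-- If `A ⊕ A' = {0,…,R−1}` with `A ≠ {0}`, `A' ≠ {0}` and `R ≥ 2`, then
`gcd(A)` divides `R`. -/
theorem stmt11 (A A' : Finset ℕ) (R : ℕ) (hR : 2 ≤ R) (h : ComplPair A A' R)
    (hA : A ≠ {0}) (hA' : A' ≠ {0}) :
    A.gcd id ∣ R := by
  obtain ⟨hlt, huniq⟩ := h
  set d := A.gcd id with hd
  obtain ⟨p0, ⟨hp1, hp2, hps⟩, -⟩ := huniq 0 (by omega)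
  have h1 : p0.1 = 0 := by omega
  have h2 : p0.2 = 0 := by omega
  have h0A : (0:ℕ) ∈ A := h1 ▸ hp1
  have h0A' : (0:ℕ) ∈ A' := h2 ▸ hp2
  obtain ⟨a, haA, ha0⟩ : ∃ a ∈ A, a ≠ 0 := by
    by_contra hc
    push_neg at hc
    exact hA (Finset.eq_singleton_iff_unique_mem.mpr ⟨h0A, fun x hx => hc x hx⟩)
  have hcard : 2 ≤ A.card :=
    Finset.one_lt_card.mpr ⟨0, h0A, a, haA, fun e => ha0 e.symm⟩
  have hdvdA : ∀ x ∈ A, d ∣ x := fun x hx => Finset.gcd_dvd hx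
  rcases Nat.lt_or_ge d 2 with hdlt | hdge
  · interval_cases d
    · exact absurd (Finset.gcd_eq_zero_iff.mp hd.symm a haA) ha0
    · exact one_dvd R
  have key : ∀ r : ℕ, A.card ∣ ((Finset.range R).filter (fun k => k ≡ r [MOD d])).card := by
    intro r
    have hc : (A ×ˢ (A'.filter (fun a' => a' ≡ r [MOD d]))).card
        = ((Finset.range R).filter (fun k => k ≡ r [MOD d])).card := by
      apply Finset.card_bij (fun p _ => p.1 + p.2)
      · rintro ⟨x, y⟩ hp
        simp only [Finset.mem_product, Finset.mem_filter] at hp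
        obtain ⟨hx, hy, hyr⟩ := hp
        refine Finset.mem_filter.mpr ⟨Finset.mem_range.mpr (hlt _ hx _ hy), ?_⟩
        have hx0 : x ≡ 0 [MOD d] := (Nat.modEq_zero_iff_dvd).mpr (hdvdA x hx)
        simpa using hx0.add hyr
      · rintro ⟨x, y⟩ hp ⟨x', y'⟩ hp' he
        simp only [Finset.mem_product, Finset.mem_filter] at hp hp'
        obtain ⟨hx, hy, -⟩ := hp
        obtain ⟨hx', hy', -⟩ := hp'
        obtain ⟨w, -, hu⟩ := huniq (x + y) (hlt _ hx _ hy)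
        have e1 := hu (x, y) ⟨hx, hy, rfl⟩
        have e2 := hu (x', y') ⟨hx', hy', he.symm⟩
        exact e1.trans e2.symm
      · intro k hk
        simp only [Finset.mem_filter, Finset.mem_range] at hk
        obtain ⟨hkR, hkr⟩ := hk
        obtain ⟨p, ⟨hq1, hq2, hqs⟩, -⟩ := huniq k hkR
        have hx0 : p.1 ≡ 0 [MOD d] := (Nat.modEq_zero_iff_dvd).mpr (hdvdA p.1 hq1)
        have : p.2 ≡ r [MOD d] := by
          have := (hx0.add (Nat.ModEq.refl p.2)).symm.trans (hqs ▸ hkr)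
          simpa using this
        exact ⟨p, Finset.mem_product.mpr ⟨hq1, Finset.mem_filter.mpr ⟨hq2, this⟩⟩, hqs⟩
    rw [← hc, Finset.card_product]
    exact Dvd.intro _ rfl
  have hcount : ∀ v : ℕ, ((Finset.range R).filter (fun k => k ≡ v [MOD d])).card
      = R / d + if v % d < R % d then 1 else 0 := by
    intro v
    rw [← Nat.count_eq_card_filter_range]
    exact Nat.count_modEq_card R (by omega) v
  by_contra hndvd
  have hR0 : R % d ≠ 0 := fun e => hndvd (Nat.dvd_of_mod_eq_zero e)
  have hRd : R % d < d := Nat.mod_lt _ (by omega)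
  have k0 := key 0
  have k1 := key (d - 1)
  rw [hcount] at k0 k1
  rw [if_pos (by simpa using Nat.pos_of_ne_zero hR0)] at k0
  rw [if_neg (by rw [Nat.mod_eq_of_lt (by omega)]; omega)] at k1
  simp only [add_zero] at k1
  have : A.card ∣ 1 := by
    have := Nat.dvd_sub k0 k1
    simpa using this
  have := Nat.le_of_dvd one_pos this
  omega
end

section
/- Suppose A ⊕ A' = {0,...,R−1} with R ≥ 2 and A ≠ {0}, A' ≠ {0}. Then exactly one of the following holds: (a) 1 ∈ A and there is d ≥ 2 dividing R and sets C, C' ⊂ ℕ₀ with A = dC ⊕ {0,...,d−1}, A' = dC', and C ⊕ C' = {0,...,R/d − 1}; or (b) the same statement with the roles of A and A' exchanged. -/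
/-- The alternative in the de Bruijn structure lemma: `1 ∈ A`, and there is
`d ≥ 2` dividing `R` and sets `C, C'` with `A = dC ⊕ {0,…,d−1}` (each element of
`A` is uniquely `dc + i`, `c ∈ C`, `0 ≤ i < d`), `A' = dC'`, and
`C ⊕ C' = {0,…,R/d − 1}`. -/
def DeBruijnAlt (R : ℕ) (A A' : Finset ℕ) : Prop :=
  1 ∈ A ∧ ∃ d : ℕ, 2 ≤ d ∧ d ∣ R ∧ ∃ C C' : Finset ℕ,
    (∀ a, a ∈ A ↔ ∃ c ∈ C, ∃ i < d, a = d * c + i) ∧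
    (∀ a ∈ A, ∃! p : ℕ × ℕ, p.1 ∈ C ∧ p.2 < d ∧ a = d * p.1 + p.2) ∧
    A' = C'.image (fun c => d * c) ∧
    ComplPair C C' (R / d)

section DBaux

private lemma cp_symm {A A' : Finset ℕ} {R : ℕ} (h : ComplPair A A' R) :
    ComplPair A' A R := by
  obtain ⟨hlt, huniq⟩ := h
  constructor
  · intro a ha a' ha'; have := hlt a' ha' a ha; omega
  · intro k hk
    obtain ⟨p, ⟨hp1, hp2, hp3⟩, hu⟩ := huniq k hk
    refine ⟨(p.2, p.1), ⟨hp2, hp1, by omega⟩, ?_⟩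
    rintro ⟨q1, q2⟩ ⟨hq1, hq2, hq3⟩
    have := hu (q2, q1) ⟨hq2, hq1, by simp at hq3 ⊢; omega⟩
    rw [Prod.ext_iff] at this ⊢
    exact ⟨this.2, this.1⟩

private lemma cp_uniq {A A' : Finset ℕ} {R : ℕ} (h : ComplPair A A' R)
    {a a' b b' : ℕ} (ha : a ∈ A) (ha' : a' ∈ A') (hb : b ∈ A) (hb' : b' ∈ A')
    (hs : a + a' = b + b') : a = b ∧ a' = b' := by
  obtain ⟨p, _, hu⟩ := h.2 (a + a') (h.1 a ha a' ha')
  have h1 := hu (a, a') ⟨ha, ha', rfl⟩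
  have h2 := hu (b, b') ⟨hb, hb', hs.symm⟩
  have h3 := h1.trans h2.symm
  exact ⟨(Prod.ext_iff.mp h3).1, (Prod.ext_iff.mp h3).2⟩

private lemma cp_rep {A A' : Finset ℕ} {R : ℕ} (h : ComplPair A A' R)
    {k : ℕ} (hk : k < R) : ∃ a ∈ A, ∃ a' ∈ A', a + a' = k := by
  obtain ⟨p, ⟨h1, h2, h3⟩, _⟩ := h.2 k hk
  exact ⟨p.1, h1, p.2, h2, h3⟩

private lemma db_main {A A' : Finset ℕ} {R : ℕ} (h : ComplPair A A' R)
    (hR : 2 ≤ R) (h1A : 1 ∈ A) (hA' : A' ≠ {0}) : DeBruijnAlt R A A' := by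
  classical
  -- basic facts
  obtain ⟨z, hz, z', hz', hzz⟩ := cp_rep h (show 0 < R by omega)
  have h0A : 0 ∈ A := by have hz0 : z = 0 := (by omega); rwa [hz0] at hz
  have h0A' : 0 ∈ A' := by have hz0 : z' = 0 := (by omega); rwa [hz0] at hz'
  have hmemR : ∀ a ∈ A, a < R := fun a ha => by have := h.1 a ha 0 h0A'; omega
  have hmemR' : ∀ b ∈ A', b < R := fun b hb => by have := h.1 0 h0A b hb; omega
  -- d = least positive element of A'
  have hexA' : (A'.filter (fun x => x ≠ 0)).Nonempty := by
    rcases Finset.eq_empty_or_nonempty (A'.filter (fun x => x ≠ 0)) with he | hne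
    · exfalso
      apply hA'
      apply Finset.eq_singleton_iff_unique_mem.mpr
      refine ⟨h0A', fun x hx => ?_⟩
      by_contra hx0
      have hmem : x ∈ A'.filter (fun x => x ≠ 0) := Finset.mem_filter.mpr ⟨hx, hx0⟩
      simp [he] at hmem
    · exact hne
  set d := (A'.filter (fun x => x ≠ 0)).min' hexA' with hd
  have hdmem := (A'.filter (fun x => x ≠ 0)).min'_mem hexA'
  rw [Finset.mem_filter] at hdmem
  have hdA' : d ∈ A' := hdmem.1
  have hd0 : d ≠ 0 := hdmem.2
  have hdmin : ∀ x ∈ A', x ≠ 0 → d ≤ x := fun x hx hx0 =>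
    Finset.min'_le _ x (Finset.mem_filter.mpr ⟨hx, hx0⟩)
  have hdR' : d < R := hmemR' d hdA'
  have hd2 : 2 ≤ d := by
    rcases Nat.lt_or_ge d 2 with hlt | hge
    · exfalso
      have hd1 : d = 1 := by omega
      have h1A' : 1 ∈ A' := by rwa [hd1] at hdA'
      have := cp_uniq h h1A h0A' h0A h1A' (by omega)
      omega
    · exact hge
  -- all small numbers are in A
  have hsmall : ∀ i, i < d → i ∈ A := by
    intro i hi
    obtain ⟨a, ha, a', ha', hs⟩ := cp_rep h (show i < R by omega)
    have ha'0 : a' = 0 := by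
      by_contra h0
      have := hdmin a' ha' h0
      omega
    have hai : a = i := by omega
    rwa [hai] at ha
  -- key structural induction
  have key : ∀ N, d ∣ N → N < R →
      ∃ x y, d ∣ y ∧ y ∈ A' ∧ (∀ i < d, x + i ∈ A) ∧ x + y = N := by
    intro N
    induction N using Nat.strong_induction_on with
    | _ N IH =>
    intro hdN hNR
    rcases Nat.eq_zero_or_pos N with hN0 | hNpos
    · subst hN0
      exact ⟨0, 0, dvd_zero d, h0A', fun i hi => by simpa using hsmall i hi, by simp⟩
    have hdN' : d ≤ N := Nat.le_of_dvd hNpos hdN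
    obtain ⟨a, ha, a', ha', hs⟩ := cp_rep h hNR
    by_cases ha'0 : a' = 0
    · -- a = N ∈ A ; inner induction on the block
      have haA : N ∈ A := by have hae : a = N := (by omega); rwa [hae] at ha
      have hblock : ∀ i, i < d → N + i ∈ A := by
        intro i
        induction i with
        | zero => intro _; simpa using haA
        | succ i ih =>
          intro hi
          have hiA : N + i ∈ A := ih (by omega)
          have hNd : N + d < R := h.1 N haA d hdA'
          have hlt : N + (i + 1) < R := by omega
          obtain ⟨b, hb, b', hb', hbs⟩ := cp_rep h hlt
          by_cases hb'0 : b' = 0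
          · have hbe : b = N + (i + 1) := by omega
            rwa [hbe] at hb
          · exfalso
            have hb'd : d ≤ b' := hdmin b' hb' hb'0
            rcases Nat.eq_zero_or_pos b with hb0 | hbpos
            · -- b = 0 : then N+i+1 ∈ A' and N+d has two representations
              have hmem : d - (i + 1) ∈ A := hsmall _ (by omega)
              have e := cp_uniq h haA hdA' hmem hb'
                (show N + d = (d - (i + 1)) + b' by omega)
              omega
            · -- b > 0
              obtain ⟨w, j, hwdvd, hjd, hwj⟩ :
                  ∃ w j, d ∣ w ∧ j < d ∧ w + j = b :=
                ⟨d * (b / d), b % d, dvd_mul_right d (b / d),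
                  Nat.mod_lt _ (by omega), Nat.div_add_mod b d⟩
              have hbN : b < N := by omega
              have hwN : w < N := by omega
              obtain ⟨x2, y2, hy2d, hy2, hx2, hs2⟩ := IH w hwN hwdvd (by omega)
              have e2 := cp_uniq h hb h0A' (hx2 j hjd) hy2
                (show b + 0 = (x2 + j) + y2 by omega)
              have hy20 : y2 = 0 := e2.2.symm
              by_cases hj0 : j = 0
              · -- b is a multiple of d ; then b' is too, contradiction
                have hbw : b = w := by omega
                have hdvdb : d ∣ b := by rw [hbw]; exact hwdvd
                have hdb : d ≤ b := Nat.le_of_dvd hbpos hdvdb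
                obtain ⟨w', j', hw'dvd, hj'd, hw'j⟩ :
                    ∃ w j, d ∣ w ∧ j < d ∧ w + j = b' :=
                  ⟨d * (b' / d), b' % d, dvd_mul_right d (b' / d),
                    Nat.mod_lt _ (by omega), Nat.div_add_mod b' d⟩
                have hw'N : w' < N := by omega
                obtain ⟨x3, y3, hy3d, hy3, hx3, hs3⟩ := IH w' hw'N hw'dvd (by omega)
                have e3 := cp_uniq h h0A hb' (hx3 j' hj'd) hy3
                  (show 0 + b' = (x3 + j') + y3 by omega)
                have hdvdb' : d ∣ b' := by rw [e3.2]; exact hy3d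
                have hdvdi : d ∣ (i + 1) := by
                  have h4 : i + 1 = (b + b') - N := by omega
                  rw [h4]
                  exact Nat.dvd_sub (Nat.dvd_add hdvdb hdvdb') hdN
                have := Nat.le_of_dvd (by omega) hdvdi
                omega
              · -- j ≠ 0 : b-1 ∈ A gives a second representation of N+i
                have hb1 : b - 1 ∈ A := by
                  have hb1e : b - 1 = x2 + (j - 1) := by omega
                  rw [hb1e]; exact hx2 _ (by omega)
                have e4 := cp_uniq h hiA h0A' hb1 hb'
                  (show (N + i) + 0 = (b - 1) + b' by omega)
                omega
      exact ⟨N, 0, dvd_zero d, h0A', hblock, by simp⟩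
    · -- a' ≠ 0
      have ha'd : d ≤ a' := hdmin a' ha' ha'0
      have haN : a < N := by omega
      obtain ⟨w, j, hwdvd, hjd, hwj⟩ : ∃ w j, d ∣ w ∧ j < d ∧ w + j = a :=
        ⟨d * (a / d), a % d, dvd_mul_right d (a / d),
          Nat.mod_lt _ (by omega), Nat.div_add_mod a d⟩
      have hwN : w < N := by omega
      obtain ⟨x1, y1, hy1d, hy1, hx1, hs1⟩ := IH w hwN hwdvd (by omega)
      have e1 := cp_uniq h ha h0A' (hx1 j hjd) hy1
        (show a + 0 = (x1 + j) + y1 by omega)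
      have hy10 : y1 = 0 := e1.2.symm
      by_cases hj0 : j = 0
      · have hxw : x1 = w := by omega
        refine ⟨w, a', ?_, ha', fun i hi => by rw [← hxw]; exact hx1 i hi, by omega⟩
        have ha'e : a' = N - w := by omega
        rw [ha'e]
        exact Nat.dvd_sub hdN hwdvd
      · exfalso
        have ha1 : a - 1 ∈ A := by
          have ha1e : a - 1 = x1 + (j - 1) := by omega
          rw [ha1e]; exact hx1 _ (by omega)
        obtain ⟨x2, y2, hy2d, hy2, hx2, hs2⟩ := IH (N - d) (by omega)
          (Nat.dvd_sub hdN dvd_rfl) (by omega)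
        have e2 := cp_uniq h ha1 ha' (hx2 (d - 1) (by omega)) hy2
          (show (a - 1) + a' = (x2 + (d - 1)) + y2 by omega)
        have hdx2 : d ∣ x2 := by
          have h5 : x2 = (N - d) - y2 := by omega
          rw [h5]; exact Nat.dvd_sub (Nat.dvd_sub hdN dvd_rfl) hy2d
        have hda : d ∣ a := by
          have h6 : a = x2 + d := by omega
          rw [h6]; exact Nat.dvd_add hdx2 dvd_rfl
        have hdj : d ∣ j := by
          have h7 : j = a - w := by omega
          rw [h7]; exact Nat.dvd_sub hda hwdvd
        have := Nat.le_of_dvd (by omega) hdj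
        omega
  -- d divides R
  have hdR : d ∣ R := by
    by_contra hndvd
    obtain ⟨w, j, hwdvd, hjd, hwj⟩ : ∃ w j, d ∣ w ∧ j < d ∧ w + j = R :=
      ⟨d * (R / d), R % d, dvd_mul_right d (R / d),
        Nat.mod_lt _ (by omega), Nat.div_add_mod R d⟩
    have hj0 : j ≠ 0 := by
      intro hj
      apply hndvd
      have hwR : w = R := by omega
      rwa [hwR] at hwdvd
    obtain ⟨x, y, hyd, hy, hx, hsxy⟩ := key w hwdvd (by omega)
    have hlt := h.1 (x + (d - 1)) (hx _ (by omega)) y hy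
    omega
  -- block structure of A
  have blockA : ∀ a ∈ A, ∃ w, d ∣ w ∧ w ≤ a ∧ a < w + d ∧ ∀ i < d, w + i ∈ A := by
    intro a ha
    obtain ⟨w, j, hwdvd, hjd, hwj⟩ : ∃ w j, d ∣ w ∧ j < d ∧ w + j = a :=
      ⟨d * (a / d), a % d, dvd_mul_right d (a / d),
        Nat.mod_lt _ (by omega), Nat.div_add_mod a d⟩
    obtain ⟨x, y, hyd, hy, hx, hsxy⟩ := key w hwdvd (by have := hmemR a ha; omega)
    have e := cp_uniq h ha h0A' (hx j hjd) hy (show a + 0 = (x + j) + y by omega)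
    have hxw : x = w := by omega
    refine ⟨w, hwdvd, by omega, by omega, ?_⟩
    rw [← hxw]; exact hx
  -- every element of A' is divisible by d
  have divA' : ∀ b ∈ A', d ∣ b := by
    intro b hb
    obtain ⟨w, j, hwdvd, hjd, hwj⟩ : ∃ w j, d ∣ w ∧ j < d ∧ w + j = b :=
      ⟨d * (b / d), b % d, dvd_mul_right d (b / d),
        Nat.mod_lt _ (by omega), Nat.div_add_mod b d⟩
    obtain ⟨x, y, hyd, hy, hx, hsxy⟩ := key w hwdvd (by have := hmemR' b hb; omega)
    have e := cp_uniq h h0A hb (hx j hjd) hy (show 0 + b = (x + j) + y by omega)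
    have hj0 : j = 0 := by omega
    have hwb : w = b := by omega
    rwa [hwb] at hwdvd
  -- the quotient sets
  have hmemC : ∀ c, c ∈ (A.filter (fun a => d ∣ a)).image (· / d) ↔ d * c ∈ A := by
    intro c
    simp only [Finset.mem_image, Finset.mem_filter]
    constructor
    · rintro ⟨b, ⟨hbA, hbd⟩, rfl⟩
      obtain ⟨m, rfl⟩ := hbd
      rwa [Nat.mul_div_cancel_left m (by omega)]
    · intro hc
      exact ⟨d * c, ⟨hc, dvd_mul_right d c⟩, Nat.mul_div_cancel_left c (by omega)⟩
  have hmemC' : ∀ c, c ∈ A'.image (· / d) ↔ d * c ∈ A' := by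
    intro c
    simp only [Finset.mem_image]
    constructor
    · rintro ⟨b, hbA, rfl⟩
      obtain ⟨m, rfl⟩ := divA' b hbA
      rwa [Nat.mul_div_cancel_left m (by omega)]
    · intro hc
      exact ⟨d * c, hc, Nat.mul_div_cancel_left c (by omega)⟩
  refine ⟨h1A, d, hd2, hdR, (A.filter (fun a => d ∣ a)).image (· / d),
    A'.image (· / d), ?_, ?_, ?_, ?_⟩
  · -- membership description of A
    intro a
    constructor
    · intro ha
      obtain ⟨w, hwd, hw1, hw2, hwblk⟩ := blockA a ha
      obtain ⟨c, rfl⟩ := hwd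
      refine ⟨c, (hmemC c).mpr ?_, a - d * c, by omega, by omega⟩
      have := hwblk 0 (by omega)
      simpa using this
    · rintro ⟨c, hc, i, hi, rfl⟩
      have hdc : d * c ∈ A := (hmemC c).mp hc
      obtain ⟨w, hwd, hw1, hw2, hwblk⟩ := blockA _ hdc
      have hwe : w = d * c := by
        have h8 : d ∣ d * c - w := Nat.dvd_sub (dvd_mul_right d c) hwd
        rcases Nat.eq_zero_or_pos (d * c - w) with h9 | h9
        · omega
        · have := Nat.le_of_dvd h9 h8; omega
      rw [← hwe]; exact hwblk i hi
  · -- uniqueness of block decomposition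
    intro a ha
    obtain ⟨w, hwd, hw1, hw2, hwblk⟩ := blockA a ha
    obtain ⟨c, rfl⟩ := hwd
    refine ⟨(c, a - d * c), ⟨(hmemC c).mpr (by simpa using hwblk 0 (by omega)),
      (by show a - d * c < d; omega), (by show a = d * c + (a - d * c); omega)⟩, ?_⟩
    rintro ⟨c1, i1⟩ ⟨hc1, hi1, he1⟩
    dsimp only at hc1 hi1 he1
    simp only [Prod.mk.injEq]
    have hcc : c1 = c := by
      rcases Nat.lt_trichotomy c1 c with hlt | heq | hgt
      · have hmul := Nat.mul_le_mul (le_refl d) (show c1 + 1 ≤ c by omega)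
        rw [Nat.mul_add, Nat.mul_one] at hmul
        omega
      · exact heq
      · have hmul := Nat.mul_le_mul (le_refl d) (show c + 1 ≤ c1 by omega)
        rw [Nat.mul_add, Nat.mul_one] at hmul
        omega
    subst hcc
    exact ⟨rfl, by omega⟩
  · -- A' is d * C'
    ext b
    constructor
    · intro hb
      obtain ⟨m, rfl⟩ := divA' b hb
      exact Finset.mem_image.mpr ⟨m, (hmemC' m).mpr hb, rfl⟩
    · intro hb
      obtain ⟨m, hm, rfl⟩ := Finset.mem_image.mp hb
      exact (hmemC' m).mp hm
  · -- ComplPair C C' (R/d)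
    obtain ⟨Q, hQ⟩ := hdR
    have hQd : R / d = Q := by rw [hQ]; exact Nat.mul_div_cancel_left Q (by omega)
    constructor
    · intro c hc c' hc'
      have hlt := h.1 _ ((hmemC c).mp hc) _ ((hmemC' c').mp hc')
      rw [hQd]
      by_contra hcon
      push_neg at hcon
      have hmul := Nat.mul_le_mul (le_refl d) hcon
      rw [Nat.mul_add] at hmul
      omega
    · intro k hk
      rw [hQd] at hk
      have hdk : d * k < R := by
        have hmul := Nat.mul_le_mul (le_refl d) (show k + 1 ≤ Q by omega)
        rw [Nat.mul_add, Nat.mul_one] at hmul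
        omega
      obtain ⟨x, y, hyd, hy, hx, hsxy⟩ := key (d * k) (dvd_mul_right d k) hdk
      have hxA : x ∈ A := by simpa using hx 0 (by omega)
      have hxd : d ∣ x := by
        have h9 : x = d * k - y := by omega
        rw [h9]; exact Nat.dvd_sub (dvd_mul_right d k) hyd
      obtain ⟨cx, rfl⟩ := hxd
      obtain ⟨cy, rfl⟩ := hyd
      have hsum : cx + cy = k := by
        have h10 : d * (cx + cy) = d * k := by rw [Nat.mul_add]; omega
        exact Nat.eq_of_mul_eq_mul_left (by omega) h10
      refine ⟨(cx, cy), ⟨(hmemC cx).mpr hxA, (hmemC' cy).mpr hy, (by exact hsum)⟩, ?_⟩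
      rintro ⟨c1, c2⟩ ⟨hc1, hc2, hce⟩
      dsimp only at hc1 hc2 hce
      have e := cp_uniq h ((hmemC c1).mp hc1) ((hmemC' c2).mp hc2) hxA hy
        (show d * c1 + d * c2 = d * cx + d * cy by
          rw [← Nat.mul_add, ← Nat.mul_add, hce, hsum])
      simp only [Prod.mk.injEq]
      exact ⟨Nat.eq_of_mul_eq_mul_left (by omega) e.1,
        Nat.eq_of_mul_eq_mul_left (by omega) e.2⟩

end DBaux

/-- Structure lemma for complementing sets: if `A ⊕ A' = {0,…,R−1}` with
`A ≠ {0}`, `A' ≠ {0}`, then exactly one of the two (symmetric) alternatives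
holds. -/
theorem stmt12 (A A' : Finset ℕ) (R : ℕ) (hR : 2 ≤ R) (h : ComplPair A A' R)
    (hA : A ≠ {0}) (hA' : A' ≠ {0}) :
    Xor' (DeBruijnAlt R A A') (DeBruijnAlt R A' A) := by
  obtain ⟨z, hz, z', hz', hzz⟩ := cp_rep h (show 0 < R by omega)
  have h0A : 0 ∈ A := by have hz0 : z = 0 := (by omega); rwa [hz0] at hz
  have h0A' : 0 ∈ A' := by have hz0 : z' = 0 := (by omega); rwa [hz0] at hz'
  obtain ⟨a, ha, a', ha', hs⟩ := cp_rep h (show 1 < R by omega)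
  have hnot : ¬ (1 ∈ A ∧ 1 ∈ A') := by
    rintro ⟨h1, h1'⟩
    have := cp_uniq h h1 h0A' h0A h1' (by omega)
    omega
  have hor : 1 ∈ A ∨ 1 ∈ A' := by
    rcases (show (a = 1 ∧ a' = 0) ∨ (a = 0 ∧ a' = 1) by omega) with ⟨h1, h2⟩ | ⟨h1, h2⟩
    · left; rwa [h1] at ha
    · right; rwa [h2] at ha'
  rcases hor with h1 | h1
  · left
    exact ⟨db_main h hR h1 hA', fun hc => hnot ⟨h1, hc.1⟩⟩
  · right
    exact ⟨db_main (cp_symm h) hR h1 hA, fun hc => hnot ⟨hc.1, h1⟩⟩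
end
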